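/- arXiv:math/0308240 — 3 statements merged into one kernel-verified Lean document; each statement's English description precedes it below -/
import Mathlib

section
/- If a sequence of functions $F_n \in L_2(X,\mu)\hat\otimes L_2(Y,\nu)$ converges to $0$ in the projective tensor norm, then there exists a subsequence $F_{n_j}$ and null sets $M \subseteq X$, $N \subseteq Y$ (i.e., $\mu(M)=0$, $\nu(N)=0$) such that $F_{n_j}(x,y) \to 0$ for every $(x,y) \in (X\setminus M) \times (Y\setminus N)$. -/
open MeasureTheory Filter Topology ENNReal

/-!
Weight the `k`-th term of `Fₙ` by `w = ‖gₙₖ‖₂ / ‖fₙₖ‖₂`. The inequality `|a b| ≤ w |a|² + w⁻¹ |b|²`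
bounds `|Fₙ(x, y)|` by `uₙ(x) + vₙ(y)` with `uₙ = ∑ₖ w |fₙₖ|²` and `vₙ = ∑ₖ w⁻¹ |gₙₖ|²`, and both
`∫ uₙ` and `∫ vₙ` are at most `∑ₖ ‖fₙₖ‖₂ ‖gₙₖ‖₂`. Along a subsequence on which these bounds are
summable, monotone convergence gives `∑ⱼ uₙⱼ < ∞` almost everywhere, hence `uₙⱼ → 0` a.e., and
likewise `vₙⱼ → 0` a.e. Computing in `ℝ≥0∞`, where `0 * ∞ = 0`, the terms with a vanishing norm
need no separate treatment.
-/

theorem ENNReal.mul_le_mul_sq_add_inv_mul_sq (w p q : ℝ≥0∞) :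
    p * q ≤ w * p ^ 2 + w⁻¹ * q ^ 2 := by
  rcases le_total q (w * p) with h | h
  · calc p * q ≤ p * (w * p) := by gcongr
      _ = w * p ^ 2 := by ring
      _ ≤ _ := le_self_add
  rcases eq_or_ne w 0 with rfl | hw0
  · rcases eq_or_ne q 0 with rfl | hq0 <;> simp [*]
  rcases eq_or_ne w ∞ with rfl | hwt
  · rcases eq_or_ne p 0 with rfl | hp0 <;> simp [*]
  calc p * q = w⁻¹ * (w * p) * q := by rw [← mul_assoc, ENNReal.inv_mul_cancel hw0 hwt, one_mul]
    _ ≤ w⁻¹ * q * q := by gcongr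
    _ = w⁻¹ * q ^ 2 := by ring
    _ ≤ _ := le_add_self

theorem ENNReal.div_mul_sq_le (a b : ℝ≥0∞) : b / a * a ^ 2 ≤ a * b := by
  rcases eq_or_ne a 0 with rfl | ha0
  · simp
  rcases eq_or_ne a ∞ with rfl | hat
  · simp
  rw [sq, ← mul_assoc, ENNReal.div_mul_cancel ha0 hat, mul_comm]

theorem ENNReal.inv_div_mul_sq_le (a b : ℝ≥0∞) : (b / a)⁻¹ * b ^ 2 ≤ a * b := by
  rcases eq_or_ne b 0 with rfl | hb0
  · simp
  rcases eq_or_ne b ∞ with rfl | hbt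
  · rcases eq_or_ne a 0 with rfl | ha0 <;> simp [ENNReal.div_zero, *]
  rw [ENNReal.inv_div (Or.inr hbt) (Or.inr hb0), sq, ← mul_assoc, ENNReal.div_mul_cancel hb0 hbt]

theorem enorm_tsum_mul_le_tsum_add_tsum {R : Type*} [NormedRing R] (a b : ℕ → R) (w : ℕ → ℝ≥0∞) :
    ‖∑' k, a k * b k‖ₑ ≤ ∑' k, w k * ‖a k‖ₑ ^ 2 + ∑' k, (w k)⁻¹ * ‖b k‖ₑ ^ 2 := by
  rw [← ENNReal.tsum_add]
  calc ‖∑' k, a k * b k‖ₑ ≤ ∑' k, ‖a k * b k‖ₑ := enorm_tsum_le_tsum_enorm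
    _ ≤ ∑' k, ‖a k‖ₑ * ‖b k‖ₑ :=
      ENNReal.tsum_le_tsum fun k => by simpa using enorm_smul_le (r := a k) (x := b k)
    _ ≤ _ := ENNReal.tsum_le_tsum fun k => ENNReal.mul_le_mul_sq_add_inv_mul_sq _ _ _

theorem lintegral_enorm_sq {α E : Type*} [MeasurableSpace α] [NormedAddCommGroup E]
    (μ : Measure α) (f : α → E) :
    ∫⁻ x, ‖f x‖ₑ ^ 2 ∂μ = eLpNorm f 2 μ ^ 2 := by
  simpa using (eLpNorm_nnreal_pow_eq_lintegral (μ := μ) (f := f) (p := 2) two_ne_zero).symm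

theorem lintegral_tsum_mul_enorm_sq {α E : Type*} [MeasurableSpace α] [NormedAddCommGroup E]
    {μ : Measure α} {f : ℕ → α → E} (hf : ∀ k, AEStronglyMeasurable (f k) μ) (c : ℕ → ℝ≥0∞) :
    ∫⁻ x, ∑' k, c k * ‖f k x‖ₑ ^ 2 ∂μ = ∑' k, c k * eLpNorm (f k) 2 μ ^ 2 := by
  have hmeas : ∀ k, AEMeasurable (fun x => ‖f k x‖ₑ ^ 2) μ := fun k => (hf k).enorm.pow_const 2
  rw [lintegral_tsum fun k => (hmeas k).const_mul (c k)]
  simp_rw [lintegral_const_mul'' _ (hmeas _), lintegral_enorm_sq]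

theorem ae_tendsto_zero_tsum_mul_enorm_sq {α E : Type*} [MeasurableSpace α]
    [NormedAddCommGroup E] {μ : Measure α} {f : ℕ → ℕ → α → E}
    (hf : ∀ n k, AEStronglyMeasurable (f n k) μ) (c : ℕ → ℕ → ℝ≥0∞)
    (h : ∑' n, ∑' k, c n k * eLpNorm (f n k) 2 μ ^ 2 ≠ ∞) :
    ∀ᵐ x ∂μ, Tendsto (fun n => ∑' k, c n k * ‖f n k x‖ₑ ^ 2) atTop (𝓝 0) := by
  have hmeas : ∀ n, AEMeasurable (fun x => ∑' k, c n k * ‖f n k x‖ₑ ^ 2) μ := fun n =>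
    AEMeasurable.tsum fun k => ((hf n k).enorm.pow_const 2).const_mul (c n k)
  simp_rw [← lintegral_tsum_mul_enorm_sq (hf _), ← lintegral_tsum hmeas] at h
  filter_upwards [ae_lt_top' (AEMeasurable.tsum hmeas) h] with x hx
  exact ENNReal.tendsto_atTop_zero_of_tsum_ne_top hx.ne

theorem ENNReal.exists_strictMono_tsum_ne_top {a : ℕ → ℝ≥0∞} (ha : Tendsto a atTop (𝓝 0)) :
    ∃ ns : ℕ → ℕ, StrictMono ns ∧ ∑' j, a (ns j) ≠ ∞ := by
  have hsmall : ∀ j : ℕ, ∀ᶠ n in atTop, a n ≤ 2⁻¹ ^ j := fun j =>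
    ENNReal.tendsto_nhds_zero.1 ha _ (ENNReal.pow_pos (by simp) j)
  obtain ⟨ns, hmono, hns⟩ := extraction_forall_of_eventually hsmall
  refine ⟨ns, hmono, ne_top_of_le_ne_top ?_ (ENNReal.tsum_le_tsum hns)⟩
  simp [ENNReal.tsum_geometric, ENNReal.one_sub_inv_two]

theorem stmt0_general {X Y : Type*} [MeasurableSpace X] [MeasurableSpace Y]
    (μ : Measure X) (ν : Measure Y)
    (F : ℕ → X → Y → ℂ) (f : ℕ → ℕ → X → ℂ) (g : ℕ → ℕ → Y → ℂ)
    (hf : ∀ n k, MemLp (f n k) 2 μ) (hg : ∀ n k, MemLp (g n k) 2 ν)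
    (hrep : ∀ n x y, F n x y = ∑' k, f n k x * g n k y)
    (hnorm : Tendsto (fun n => ∑' k, eLpNorm (f n k) 2 μ * eLpNorm (g n k) 2 ν)
      atTop (𝓝 0)) :
    ∃ ns : ℕ → ℕ, StrictMono ns ∧ ∃ M : Set X, ∃ N : Set Y, μ M = 0 ∧ ν N = 0 ∧
      ∀ x ∉ M, ∀ y ∉ N, Tendsto (fun j => F (ns j) x y) atTop (𝓝 0) := by
  obtain ⟨ns, hns, hsum⟩ := ENNReal.exists_strictMono_tsum_ne_top hnorm
  set w : ℕ → ℕ → ℝ≥0∞ := fun n k => eLpNorm (g n k) 2 ν / eLpNorm (f n k) 2 μ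
  have hfae := ae_tendsto_zero_tsum_mul_enorm_sq (fun j k => (hf (ns j) k).aestronglyMeasurable)
    (fun j k => w (ns j) k)
    (ne_top_of_le_ne_top hsum <| ENNReal.tsum_le_tsum fun j =>
      ENNReal.tsum_le_tsum fun k => ENNReal.div_mul_sq_le _ _)
  have hgae := ae_tendsto_zero_tsum_mul_enorm_sq (fun j k => (hg (ns j) k).aestronglyMeasurable)
    (fun j k => (w (ns j) k)⁻¹)
    (ne_top_of_le_ne_top hsum <| ENNReal.tsum_le_tsum fun j =>
      ENNReal.tsum_le_tsum fun k => ENNReal.inv_div_mul_sq_le _ _)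
  refine ⟨ns, hns, _, _, ae_iff.1 hfae, ae_iff.1 hgae, fun x hx y hy => ?_⟩
  rw [tendsto_zero_iff_enorm_tendsto_zero]
  refine tendsto_of_tendsto_of_tendsto_of_le_of_le tendsto_const_nhds
    (by simpa using (not_not.1 hx).add (not_not.1 hy)) (fun _ => zero_le) fun j => ?_
  rw [hrep]
  exact enorm_tsum_mul_le_tsum_add_tsum _ _ _

/-- Any sequence in `L₂(X,μ) ⊗̂ L₂(Y,ν)` (given via representations
`Fₙ(x,y) = ∑ₖ fₙₖ(x) gₙₖ(y)`) converging to `0` in the projective tensor norm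
(witnessed by representations with `∑ₖ ‖fₙₖ‖₂ ‖gₙₖ‖₂ → 0`) has a subsequence
converging to `0` marginally almost everywhere, i.e. outside `(M × Y) ∪ (X × N)`
with `μ M = 0`, `ν N = 0`. -/
theorem stmt0 {X Y : Type*} [MeasurableSpace X] [MeasurableSpace Y]
    (μ : Measure X) (ν : Measure Y) [SigmaFinite μ] [SigmaFinite ν]
    (F : ℕ → X → Y → ℂ) (f : ℕ → ℕ → X → ℂ) (g : ℕ → ℕ → Y → ℂ)
    (hf : ∀ n k, MemLp (f n k) 2 μ) (hg : ∀ n k, MemLp (g n k) 2 ν)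
    (hrep : ∀ n x y, F n x y = ∑' k, f n k x * g n k y)
    (hnorm : Tendsto (fun n => ∑' k, eLpNorm (f n k) 2 μ * eLpNorm (g n k) 2 ν)
      atTop (𝓝 0)) :
    ∃ ns : ℕ → ℕ, StrictMono ns ∧ ∃ M : Set X, ∃ N : Set Y, μ M = 0 ∧ ν N = 0 ∧
      ∀ x ∉ M, ∀ y ∉ N, Tendsto (fun j => F (ns j) x y) atTop (𝓝 0) :=
  stmt0_general μ ν F f g hf hg hrep hnorm
end

section
/- Suppose a rectangle $A \times B$ is contained in a finite union $\bigcup_{k=1}^n C_k \times D_k$ of rectangles, where for each $k$ the pair of multiplication projections $(P_{C_k}, Q_{D_k})$ belongs to a bilattice $S$ of pairs of multiplication projections (closed under $(\wedge,\vee)$ and $(\vee,\wedge)$ and decreasing). Then $(P_A, Q_B) \in S$. -/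
/-- If a rectangle `A × B` is covered by finitely many rectangles `Cₖ × Dₖ`
with `(Cₖ, Dₖ) ∈ S`, where `S` is a bilattice of pairs of (measurable) sets —
closed under `(∩,∪)` and `(∪,∩)`, decreasing, and containing all `(A,∅)` and
`(∅,B)` — then `(A,B) ∈ S`. -/
theorem stmt14 {X Y : Type*} (S : Set (Set X × Set Y))
    (hleft : ∀ A : Set X, (A, (∅ : Set Y)) ∈ S)
    (hright : ∀ B : Set Y, ((∅ : Set X), B) ∈ S)
    (hops : ∀ p q, p ∈ S → q ∈ S →
      (p.1 ∩ q.1, p.2 ∪ q.2) ∈ S ∧ (p.1 ∪ q.1, p.2 ∩ q.2) ∈ S)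
    (hdec : ∀ p ∈ S, ∀ A B, A ⊆ p.1 → B ⊆ p.2 → (A, B) ∈ S)
    (n : ℕ) (C : ℕ → Set X) (D : ℕ → Set Y) (hCD : ∀ k < n, (C k, D k) ∈ S)
    (A : Set X) (B : Set Y)
    (hsub : A ×ˢ B ⊆ ⋃ k ∈ Finset.range n, C k ×ˢ D k) :
    (A, B) ∈ S := by
  induction n generalizing A B with
  | zero =>
    rcases Set.eq_empty_or_nonempty A with hA | ⟨x, hx⟩
    · exact hdec _ (hright B) A B (by simp [hA]) (le_refl B)
    rcases Set.eq_empty_or_nonempty B with hB | ⟨y, hy⟩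
    · exact hdec _ (hleft A) A B (le_refl A) (by simp [hB])
    · have := hsub (Set.mk_mem_prod hx hy)
      simp at this
  | succ n ih =>
    have hCD' : ∀ k < n, (C k, D k) ∈ S := fun k hk => hCD k (Nat.lt_succ_of_lt hk)
    -- (A \ C n) × B covered by first n rectangles
    have h1 : (A \ C n, B) ∈ S := by
      apply ih hCD'
      intro ⟨x, y⟩ hxy
      obtain ⟨hx, hy⟩ := hxy
      have := hsub (Set.mk_mem_prod hx.1 hy)
      simp only [Set.mem_iUnion, Finset.mem_range] at this ⊢
      obtain ⟨k, hk, hmem⟩ := this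
      rcases Nat.lt_succ_iff_lt_or_eq.mp hk with hk' | rfl
      · exact ⟨k, hk', hmem⟩
      · exact absurd hmem.1 hx.2
    have h2 : (A, B \ D n) ∈ S := by
      apply ih hCD'
      intro ⟨x, y⟩ hxy
      obtain ⟨hx, hy⟩ := hxy
      have := hsub (Set.mk_mem_prod hx hy.1)
      simp only [Set.mem_iUnion, Finset.mem_range] at this ⊢
      obtain ⟨k, hk, hmem⟩ := this
      rcases Nat.lt_succ_iff_lt_or_eq.mp hk with hk' | rfl
      · exact ⟨k, hk', hmem⟩
      · exact absurd hmem.2 hy.2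
    have h3 : (A ∩ C n, B ∩ D n) ∈ S :=
      hdec _ (hCD n (Nat.lt_succ_self n)) _ _ Set.inter_subset_right
        Set.inter_subset_right
    -- combine: ((A \ Cn) ∪ (A ∩ Cn), B ∩ (B ∩ Dn)) ∈ S
    have h4 := (hops _ _ h1 h3).2
    have h5 : (A, B ∩ D n) ∈ S := by
      refine hdec _ h4 A (B ∩ D n) ?_ ?_
      · intro x hx
        by_cases hc : x ∈ C n
        · exact Or.inr ⟨hx, hc⟩
        · exact Or.inl ⟨hx, hc⟩
      · intro y hy; exact ⟨hy.1, hy⟩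
    have h6 := (hops _ _ h5 h2).1
    refine hdec _ h6 A B ?_ ?_
    · intro x hx; exact ⟨hx, hx⟩
    · intro y hy
      by_cases hd : y ∈ D n
      · exact Or.inl ⟨hy, hd⟩
      · exact Or.inr ⟨hy, hd⟩
end

section
/- Let $E_1$ be a Ditkin set and $E_2$ a set of spectral synthesis for a unital semisimple regular commutative Banach algebra $\mathcal{A}$ (meaning $I_{\mathcal{A}}(E_2) = \overline{I^0_{\mathcal{A}}(E_2)}$). Then $E_1 \cup E_2$ is a set of spectral synthesis: every $u \in \mathcal{A}$ vanishing on $E_1 \cup E_2$ is in the closure of the elements vanishing on neighbourhoods of $E_1 \cup E_2$. -/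
open scoped Topology

variable {X A : Type*}

/-- Elements of `𝒜` vanishing on `E` (via the Gelfand realization `ρ`). -/
def idealOn [TopologicalSpace X] [NormedCommRing A] [NormedAlgebra ℂ A]
    (ρ : A →ₐ[ℂ] C(X, ℂ)) (E : Set X) : Set A :=
  {a | ∀ x ∈ E, ρ a x = 0}

/-- Elements of `𝒜` vanishing on a neighbourhood of `E`. -/
def idealOn0 [TopologicalSpace X] [NormedCommRing A] [NormedAlgebra ℂ A]
    (ρ : A →ₐ[ℂ] C(X, ℂ)) (E : Set X) : Set A :=
  {a | ∃ U : Set X, IsOpen U ∧ E ⊆ U ∧ ∀ x ∈ U, ρ a x = 0}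

/-- `E` is a Ditkin set: `u ∈ closure (u · I⁰(E))` for every `u ∈ I(E)`. -/
def IsDitkin [TopologicalSpace X] [NormedCommRing A] [NormedAlgebra ℂ A]
    (ρ : A →ₐ[ℂ] C(X, ℂ)) (E : Set X) : Prop :=
  ∀ u ∈ idealOn ρ E, u ∈ closure ((fun v => u * v) '' idealOn0 ρ E)

/-- `E` is a set of spectral synthesis: `I(E) = closure I⁰(E)`. -/
def IsSynthetic [TopologicalSpace X] [NormedCommRing A] [NormedAlgebra ℂ A]
    (ρ : A →ₐ[ℂ] C(X, ℂ)) (E : Set X) : Prop :=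
  ∀ u ∈ idealOn ρ E, u ∈ closure (idealOn0 ρ E)

/-- The union of a Ditkin set and a set of spectral synthesis, in the spectrum
of a unital semisimple regular commutative Banach algebra, is a set of
spectral synthesis. -/
theorem stmt19 [TopologicalSpace X] [CompactSpace X] [T2Space X]
    [NormedCommRing A] [NormedAlgebra ℂ A] [CompleteSpace A] [NormOneClass A]
    (ρ : A →ₐ[ℂ] C(X, ℂ)) (hsemisimple : Function.Injective ρ)
    (hregular : ∀ E : Set X, IsClosed E → ∀ x ∉ E,
      ∃ a : A, ρ a x = 1 ∧ ∀ y ∈ E, ρ a y = 0)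
    (E₁ E₂ : Set X) (hE₁ : IsClosed E₁) (hE₂ : IsClosed E₂)
    (hD₁ : IsDitkin ρ E₁) (hS₂ : IsSynthetic ρ E₂) :
    IsSynthetic ρ (E₁ ∪ E₂) := by
  intro u hu
  have hu1 : u ∈ idealOn ρ E₁ := fun x hx => hu x (Or.inl hx)
  have hu2 : u ∈ idealOn ρ E₂ := fun x hx => hu x (Or.inr hx)
  rw [Metric.mem_closure_iff]
  intro ε hε
  have h1 := hD₁ u hu1
  rw [Metric.mem_closure_iff] at h1
  obtain ⟨b, ⟨g₁, hg₁, rfl⟩, hb⟩ := h1 (ε / 2) (by positivity)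
  obtain ⟨U₁, hU₁o, hU₁s, hU₁v⟩ := hg₁
  have h2 := hS₂ u hu2
  rw [Metric.mem_closure_iff] at h2
  obtain ⟨g₂, hg₂, hd2⟩ := h2 (ε / 2 / (‖g₁‖ + 1)) (by positivity)
  obtain ⟨U₂, hU₂o, hU₂s, hU₂v⟩ := hg₂
  refine ⟨g₂ * g₁, ⟨U₁ ∪ U₂, hU₁o.union hU₂o, ?_, ?_⟩, ?_⟩
  · rintro x (hx | hx)
    exacts [Or.inl (hU₁s hx), Or.inr (hU₂s hx)]
  · rintro x (hx | hx)
    · simp [map_mul, hU₁v x hx]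
    · simp [map_mul, hU₂v x hx]
  · have key : dist (u * g₁) (g₂ * g₁) ≤ dist u g₂ * ‖g₁‖ := by
      rw [dist_eq_norm, dist_eq_norm, ← sub_mul]
      exact norm_mul_le _ _
    have hg1 : (0:ℝ) < ‖g₁‖ + 1 := by positivity
    have h3 : dist u g₂ * ‖g₁‖ < ε / 2 := by
      calc dist u g₂ * ‖g₁‖ ≤ dist u g₂ * (‖g₁‖ + 1) :=
            mul_le_mul_of_nonneg_left (by linarith) dist_nonneg
        _ < ε / 2 / (‖g₁‖ + 1) * (‖g₁‖ + 1) := by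
            exact mul_lt_mul_of_pos_right hd2 hg1
        _ = ε / 2 := div_mul_cancel₀ _ hg1.ne'
    calc dist u (g₂ * g₁) ≤ dist u (u * g₁) + dist (u * g₁) (g₂ * g₁) :=
          dist_triangle _ _ _
      _ < ε / 2 + ε / 2 := add_lt_add hb (lt_of_le_of_lt key h3)
      _ = ε := by ring
end
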